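/- arXiv:1505.01548 — 2 statements merged into one kernel-verified Lean document; each statement's English description precedes it below -/
import Mathlib

section
/- Let L = (ℓ_j)_{j≥1} be a fractal string and let d ∈ (0,1). Then the following four conditions are equivalent: (i) M*_d < ∞; (ii) there is a constant c > 0 with ℓ_j ≤ c · j^{−1/d} for all j ≥ 1; (iii) there is a constant C > 0 with N_L(x) ≤ C x^d for all x > 0; (iv) there is a constant C₁ > 0 with φ_ν(x) = W(x) − N_ν(x) ≤ C₁ x^d for all x > 0. -/
open Filter Topology

/-- A fractal string: a nonincreasing, positive, summable sequence of lengths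
`ℓ 0 ≥ ℓ 1 ≥ ⋯ > 0` (indexed from `0`, representing `ℓ_1, ℓ_2, …`). -/
def IsFractalString (ℓ : ℕ → ℝ) : Prop :=
  (∀ j, 0 < ℓ j) ∧ Antitone ℓ ∧ Summable ℓ

/-- The volume `V(ε) = ∑ⱼ min(ℓⱼ, 2ε)` of the inner ε-neighborhood of the boundary. -/
noncomputable def stringVol (ℓ : ℕ → ℝ) (ε : ℝ) : ℝ :=
  ∑' j, min (ℓ j) (2 * ε)

/-- Upper `d`-dimensional Minkowski content `limsup_{ε→0⁺} V(ε)/ε^{1-d}`. -/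
noncomputable def upperContent (ℓ : ℕ → ℝ) (d : ℝ) : ENNReal :=
  Filter.limsup (fun ε : ℝ => ENNReal.ofReal (stringVol ℓ ε / ε ^ (1 - d))) (𝓝[>] 0)

/-- Lower `d`-dimensional Minkowski content `liminf_{ε→0⁺} V(ε)/ε^{1-d}`. -/
noncomputable def lowerContent (ℓ : ℕ → ℝ) (d : ℝ) : ENNReal :=
  Filter.liminf (fun ε : ℝ => ENNReal.ofReal (stringVol ℓ ε / ε ^ (1 - d))) (𝓝[>] 0)

/-- The Minkowski dimension `D = inf {d ≥ 0 : M*_d < ∞}`. -/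
noncomputable def minkDim (ℓ : ℕ → ℝ) : ℝ :=
  sInf {d : ℝ | 0 ≤ d ∧ upperContent ℓ d < ⊤}

/-- The spectral (frequency) counting function `N_ν(x) = ∑ⱼ ⌊ℓⱼ x⌋`. -/
noncomputable def spectralCount (ℓ : ℕ → ℝ) (x : ℝ) : ℝ :=
  ∑' j, (⌊ℓ j * x⌋₊ : ℝ)

/-- The Weyl term `W(x) = (∑ⱼ ℓⱼ) x`. -/
noncomputable def weylTerm (ℓ : ℕ → ℝ) (x : ℝ) : ℝ :=
  (∑' j, ℓ j) * x

/-- The geometric counting function `N_L(x) = #{j ≥ 1 : ℓⱼ⁻¹ ≤ x}`. -/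
noncomputable def geomCount (ℓ : ℕ → ℝ) (x : ℝ) : ℝ :=
  (({j : ℕ | (ℓ j)⁻¹ ≤ x}).ncard : ℝ)

/-- The "asymptotic second term" `φ_ν(x) = W(x) - N_ν(x)`. -/
noncomputable def phiNu (ℓ : ℕ → ℝ) (x : ℝ) : ℝ :=
  weylTerm ℓ x - spectralCount ℓ x

/-- `L` is Minkowski measurable (in dimension `D`) with Minkowski content `M`:
`V(ε)/ε^{1-D} → M` as `ε → 0⁺`. -/
def MinkMeasurableWith (ℓ : ℕ → ℝ) (D M : ℝ) : Prop :=
  Tendsto (fun ε : ℝ => stringVol ℓ ε / ε ^ (1 - D)) (𝓝[>] (0:ℝ)) (𝓝 M)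

/-- `L` is Minkowski measurable in dimension `D` (with some positive finite content). -/
def MinkMeasurable (ℓ : ℕ → ℝ) (D : ℝ) : Prop :=
  ∃ M : ℝ, 0 < M ∧ MinkMeasurableWith ℓ D M

/-- Hypothesis (6.1): `N_ν(x) = W(x) - C x^D + o(x^D)` as `x → +∞`. -/
def SpectralAsymp (ℓ : ℕ → ℝ) (D C : ℝ) : Prop :=
  Tendsto (fun x : ℝ => (spectralCount ℓ x - (weylTerm ℓ x - C * x ^ D)) / x ^ D)
    atTop (𝓝 0)

/-- The inverse spectral problem `(ISP)_D`: every fractal string of Minkowski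
dimension `D` satisfying (6.1) is Minkowski measurable. -/
def ISP (D : ℝ) : Prop :=
  ∀ ℓ : ℕ → ℝ, IsFractalString ℓ → minkDim ℓ = D →
    (∃ C : ℝ, C ≠ 0 ∧ SpectralAsymp ℓ D C) → MinkMeasurable ℓ D

/-!
(i) ⇒ (iv): since `Int.fract t ≤ min t 1`, one has `φ_ν(x) = ∑ⱼ fract(ℓⱼ x) ≤ x V(1/(2x))`.
(iv) ⇒ (iii): every `j` with `ℓⱼ x ∈ [1, 2)` contributes at least `1/2` to `φ_ν(x/2)`, so
`N_L(x) ≤ N_L(x/2) + 2 φ_ν(x/2)`; iterating down to `N_L = 0` sums a geometric series.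
(iii) ⇒ (ii): evaluate `N_L` at `1/ℓⱼ`, which gives `j + 1 ≤ C ℓⱼ^{-d}`.
(ii) ⇒ (i): split `V(ε)` at `J ≈ ε^{-d}`; the first `J` terms contribute at most `2εJ`, and the
tail is dominated termwise by the telescoping differences of `(c / q) j^{-q}`, `q = 1/d - 1`.
-/

open Filter Topology Finset

theorem Int.fract_le_self_of_nonneg {a : ℝ} (ha : 0 ≤ a) : Int.fract a ≤ a := by
  have : (0 : ℝ) ≤ ⌊a⌋ := by exact_mod_cast Int.floor_nonneg.2 ha
  linarith [Int.self_sub_fract a]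

theorem Real.mul_rpow_neg_add_one_le_sub {q n : ℝ} (hq : 0 < q) (hn : 0 < n) :
    q * (n + 1) ^ (-(q + 1)) ≤ n ^ (-q) - (n + 1) ^ (-q) := by
  obtain ⟨ξ, hξ, hslope⟩ := exists_hasDerivAt_eq_slope (fun t : ℝ => t ^ (-q))
    (fun t => -q * t ^ (-q - 1)) (lt_add_one n)
    (continuousOn_id.rpow_const fun t ht => Or.inl (hn.trans_le ht.1).ne')
    (fun t ht => Real.hasDerivAt_rpow_const (Or.inl (hn.trans ht.1).ne'))
  rw [add_sub_cancel_left, div_one, show -q - 1 = -(q + 1) by ring] at hslope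
  have : (n + 1) ^ (-(q + 1)) ≤ ξ ^ (-(q + 1)) :=
    Real.rpow_le_rpow_of_nonpos (hn.trans hξ.1) hξ.2.le (by linarith)
  linarith [mul_le_mul_of_nonneg_left this hq.le]

theorem tsum_nat_add_le_of_le_rpow {f : ℕ → ℝ} {c q : ℝ} (hf : ∀ j, 0 ≤ f j) (hc : 0 ≤ c)
    (hq : 0 < q) (hfc : ∀ j : ℕ, f j ≤ c * ((j : ℝ) + 1) ^ (-(q + 1))) {J : ℕ} (hJ : 0 < J) :
    ∑' j, f (j + J) ≤ c / q * (J : ℝ) ^ (-q) := by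
  refine Real.tsum_le_of_sum_range_le (fun j => hf _) fun n => ?_
  set g : ℕ → ℝ := fun i => ((J : ℝ) + i) ^ (-q)
  have hstep : ∀ i : ℕ, f (i + J) ≤ c / q * (g i - g (i + 1)) := by
    intro i
    have hfi : f (i + J) ≤ c * (((J : ℝ) + i) + 1) ^ (-(q + 1)) := by
      simpa only [Nat.cast_add, add_comm (i : ℝ)] using hfc (i + J)
    have hslope := Real.mul_rpow_neg_add_one_le_sub hq
      (add_pos_of_pos_of_nonneg (Nat.cast_pos.2 hJ) i.cast_nonneg)
    simp only [g, Nat.cast_succ, ← add_assoc]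
    rw [div_mul_eq_mul_div, le_div_iff₀ hq]
    linarith [mul_le_mul_of_nonneg_right hfi hq.le, mul_le_mul_of_nonneg_left hslope hc]
  calc ∑ i ∈ range n, f (i + J) ≤ ∑ i ∈ range n, c / q * (g i - g (i + 1)) :=
        sum_le_sum fun i _ => hstep i
    _ = c / q * (g 0 - g n) := by rw [← mul_sum, sum_range_sub']
    _ ≤ c / q * (J : ℝ) ^ (-q) := by
        gcongr
        simp only [g, Nat.cast_zero, add_zero]
        exact sub_le_self _ (Real.rpow_nonneg (by positivity) _)

theorem upperContent_lt_top_iff {ℓ : ℕ → ℝ} {d : ℝ} :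
    upperContent ℓ d < ⊤ ↔ ∃ K : ℝ, ∀ᶠ ε in 𝓝[>] 0, stringVol ℓ ε ≤ K * ε ^ (1 - d) := by
  constructor
  · intro hfin
    obtain ⟨K, hK, hlt, -⟩ := ENNReal.lt_iff_exists_real_btwn.1 hfin
    refine ⟨K, ?_⟩
    filter_upwards [eventually_lt_of_limsup_lt hlt, self_mem_nhdsWithin] with ε hε hεpos
    rw [← div_le_iff₀ (Real.rpow_pos_of_pos hεpos _), ← ENNReal.ofReal_le_ofReal_iff hK]
    exact hε.le
  · rintro ⟨K, hK⟩
    refine lt_of_le_of_lt (limsup_le_of_le (a := ENNReal.ofReal K) ?_ ?_) ENNReal.ofReal_lt_top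
    · isBoundedDefault
    · filter_upwards [hK, self_mem_nhdsWithin] with ε hε hεpos
      exact ENNReal.ofReal_le_ofReal ((div_le_iff₀ (Real.rpow_pos_of_pos hεpos _)).2 hε)

namespace IsFractalString

variable {ℓ : ℕ → ℝ}

theorem finite_setOf_le (h : IsFractalString ℓ) {t : ℝ} (ht : 0 < t) :
    {j | t ≤ ℓ j}.Finite := by
  simpa only [not_lt] using
    eventually_cofinite.1 (h.2.2.tendsto_cofinite_zero.eventually_lt_const ht)

theorem finite_setOf_inv_le (h : IsFractalString ℓ) {x : ℝ} (hx : 0 < x) :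
    {j | (ℓ j)⁻¹ ≤ x}.Finite :=
  (h.finite_setOf_le (inv_pos.2 hx)).subset fun j hj => (inv_le_comm₀ (h.1 j) hx).1 hj

theorem summable_min (h : IsFractalString ℓ) {t : ℝ} (ht : 0 ≤ t) :
    Summable fun j => min (ℓ j) t :=
  h.2.2.of_nonneg_of_le (fun j => le_min (h.1 j).le ht) fun _ => min_le_left _ _

theorem summable_fract_mul (h : IsFractalString ℓ) {x : ℝ} (hx : 0 ≤ x) :
    Summable fun j => Int.fract (ℓ j * x) :=
  (h.2.2.mul_right x).of_nonneg_of_le (fun _ => Int.fract_nonneg _)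
    fun j => Int.fract_le_self_of_nonneg (mul_nonneg (h.1 j).le hx)

theorem phiNu_eq_tsum_fract (h : IsFractalString ℓ) {x : ℝ} (hx : 0 ≤ x) :
    phiNu ℓ x = ∑' j, Int.fract (ℓ j * x) := by
  have hfloor : Summable fun j => (⌊ℓ j * x⌋₊ : ℝ) :=
    (h.2.2.mul_right x).of_nonneg_of_le (fun _ => Nat.cast_nonneg _)
      fun j => Nat.floor_le (mul_nonneg (h.1 j).le hx)
  rw [phiNu, weylTerm, spectralCount, ← tsum_mul_right,
    ← (h.2.2.mul_right x).tsum_sub hfloor]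
  refine tsum_congr fun j => ?_
  rw [natCast_floor_eq_intCast_floor (mul_nonneg (h.1 j).le hx), Int.self_sub_floor]

theorem stringVol_le_tsum (h : IsFractalString ℓ) {ε : ℝ} (hε : 0 ≤ ε) :
    stringVol ℓ ε ≤ ∑' j, ℓ j :=
  (h.summable_min (by positivity)).tsum_le_tsum (fun _ => min_le_left _ _) h.2.2

theorem phiNu_le_mul_stringVol (h : IsFractalString ℓ) {x : ℝ} (hx : 0 < x) :
    phiNu ℓ x ≤ x * stringVol ℓ (2 * x)⁻¹ := by
  rw [h.phiNu_eq_tsum_fract hx.le, stringVol, ← tsum_mul_left]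
  refine (h.summable_fract_mul hx.le).tsum_le_tsum (fun j => ?_)
    ((h.summable_min (by positivity)).mul_left x)
  have hmin : x * min (ℓ j) (2 * (2 * x)⁻¹) = min (ℓ j * x) 1 := by
    rw [mul_min_of_nonneg _ _ hx.le, mul_comm x (ℓ j)]
    congr 1
    field_simp
  rw [hmin]
  exact le_min (Int.fract_le_self_of_nonneg (mul_nonneg (h.1 j).le hx.le))
    (Int.fract_lt_one _).le

theorem exists_forall_stringVol_le (h : IsFractalString ℓ) {d : ℝ} (hd : d ≤ 1)
    (hfin : upperContent ℓ d < ⊤) :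
    ∃ K : ℝ, 0 < K ∧ ∀ ε : ℝ, 0 < ε → stringVol ℓ ε ≤ K * ε ^ (1 - d) := by
  obtain ⟨K₀, hK₀⟩ := upperContent_lt_top_iff.1 hfin
  obtain ⟨u, hu : 0 < u, hsub⟩ := mem_nhdsGT_iff_exists_Ioo_subset.1 hK₀
  set S := ∑' j, ℓ j
  have hS : 0 < S := h.2.2.tsum_pos (fun j => (h.1 j).le) 0 (h.1 0)
  have hu' : 0 < u ^ (1 - d) := Real.rpow_pos_of_pos hu _
  refine ⟨max K₀ (S / u ^ (1 - d)), lt_max_of_lt_right (by positivity), fun ε hε => ?_⟩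
  rcases lt_or_ge ε u with hεu | huε
  · exact (hsub ⟨hε, hεu⟩).trans (by gcongr; exact le_max_left _ _)
  · calc stringVol ℓ ε ≤ S / u ^ (1 - d) * u ^ (1 - d) := by
          rw [div_mul_cancel₀ _ hu'.ne']; exact h.stringVol_le_tsum hε.le
      _ ≤ max K₀ (S / u ^ (1 - d)) * ε ^ (1 - d) := by
          gcongr
          exact le_max_right _ _

theorem phiNu_le_of_stringVol_le (h : IsFractalString ℓ) {d K : ℝ}
    (hK : ∀ ε : ℝ, 0 < ε → stringVol ℓ ε ≤ K * ε ^ (1 - d)) {x : ℝ} (hx : 0 < x) :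
    phiNu ℓ x ≤ K / 2 ^ (1 - d) * x ^ d := by
  have hx1 : x ^ d * x ^ (1 - d) = x := by rw [← Real.rpow_add hx]; simp
  calc phiNu ℓ x ≤ x * stringVol ℓ (2 * x)⁻¹ := h.phiNu_le_mul_stringVol hx
    _ ≤ x * (K * ((2 * x)⁻¹) ^ (1 - d)) := by gcongr; exact hK _ (by positivity)
    _ = K / 2 ^ (1 - d) * x ^ d := by
        rw [Real.inv_rpow (by positivity), Real.mul_rpow zero_le_two hx.le]
        field_simp
        linear_combination (-K) * hx1

theorem ncard_le_two_mul_phiNu (h : IsFractalString ℓ) {y : ℝ} (hy : 0 < y) {s : Set ℕ}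
    (hs : s.Finite) (hband : ∀ j ∈ s, 1 / 2 ≤ ℓ j * y ∧ ℓ j * y < 1) :
    (s.ncard : ℝ) ≤ 2 * phiNu ℓ y := by
  rw [s.ncard_eq_toFinset_card hs, h.phiNu_eq_tsum_fract hy.le]
  calc (hs.toFinset.card : ℝ) = 2 * ∑ _j ∈ hs.toFinset, (1 / 2 : ℝ) := by
        rw [sum_const, nsmul_eq_mul]; ring
    _ ≤ 2 * ∑ j ∈ hs.toFinset, Int.fract (ℓ j * y) := by
        gcongr with j hj
        obtain ⟨hlo, hhi⟩ := hband j (hs.mem_toFinset.1 hj)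
        rwa [Int.fract_eq_self.2 ⟨hlo.trans' (by norm_num), hhi⟩]
    _ ≤ 2 * ∑' j, Int.fract (ℓ j * y) := by
        gcongr
        exact (h.summable_fract_mul hy.le).sum_le_tsum _ fun j _ => Int.fract_nonneg _

theorem geomCount_le_geomCount_half_add (h : IsFractalString ℓ) {x : ℝ} (hx : 0 < x) :
    geomCount ℓ x ≤ geomCount ℓ (x / 2) + 2 * phiNu ℓ (x / 2) := by
  set S : ℝ → Set ℕ := fun y => {j | (ℓ j)⁻¹ ≤ y}
  have hband : ∀ j ∈ S x \ S (x / 2), 1 / 2 ≤ ℓ j * (x / 2) ∧ ℓ j * (x / 2) < 1 := by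
    rintro j ⟨hmem, hnmem⟩
    simp only [S, Set.mem_ofPred_eq, not_le, inv_le_iff_one_le_mul₀' (h.1 j)] at hmem hnmem
    constructor <;> linarith
  have hsplit : ((S x).ncard : ℝ) ≤ (S x \ S (x / 2)).ncard + (S (x / 2)).ncard := by
    exact_mod_cast
      (S x).ncard_le_ncard_sdiff_add_ncard _ (h.finite_setOf_inv_le (half_pos hx))
  have := h.ncard_le_two_mul_phiNu (half_pos hx) (h.finite_setOf_inv_le hx).sdiff hband
  change ((S x).ncard : ℝ) ≤ (S (x / 2)).ncard + 2 * phiNu ℓ (x / 2)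
  linarith

theorem geomCount_eq_zero (h : IsFractalString ℓ) {x : ℝ} (hx : ℓ 0 * x < 1) :
    geomCount ℓ x = 0 := by
  have hempty : {j | (ℓ j)⁻¹ ≤ x} = ∅ := Set.eq_empty_of_forall_notMem fun j hj => by
    rw [Set.mem_ofPred_eq, inv_le_iff_one_le_mul₀' (h.1 j)] at hj
    have hx0 : 0 < x := pos_of_mul_pos_right (one_pos.trans_le hj) (h.1 j).le
    linarith [mul_le_mul_of_nonneg_right (h.2.1 (Nat.zero_le j)) hx0.le]
  simp [geomCount, hempty]

theorem geomCount_le_of_phiNu_le (h : IsFractalString ℓ) {d C₁ : ℝ} (hd : 0 < d)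
    (hC₁ : 0 ≤ C₁) (hφ : ∀ x : ℝ, 0 < x → phiNu ℓ x ≤ C₁ * x ^ d) {x : ℝ} (hx : 0 < x) :
    geomCount ℓ x ≤ 2 * C₁ / (2 ^ d - 1) * x ^ d := by
  have h2d : 0 < (2 : ℝ) ^ d - 1 := sub_pos.2 (Real.one_lt_rpow one_lt_two hd)
  set A := 2 * C₁ / (2 ^ d - 1)
  -- `A` is the fixed point of `A ↦ (A + 2 C₁) / 2^d`, so the halving step reproduces the bound.
  have hA : (A + 2 * C₁) / 2 ^ d = A := by
    have : A * (2 ^ d - 1) = 2 * C₁ := div_mul_cancel₀ _ h2d.ne'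
    rw [div_eq_iff (by positivity)]
    linarith
  obtain ⟨K, hK⟩ := pow_unbounded_of_one_lt (ℓ 0 * x) one_lt_two
  induction K generalizing x with
  | zero =>
    rw [h.geomCount_eq_zero (by simpa using hK)]
    positivity
  | succ K ih =>
    have hhalf := ih (half_pos hx) (by rw [pow_succ] at hK; linarith)
    calc geomCount ℓ x ≤ geomCount ℓ (x / 2) + 2 * phiNu ℓ (x / 2) :=
          h.geomCount_le_geomCount_half_add hx
      _ ≤ A * (x / 2) ^ d + 2 * (C₁ * (x / 2) ^ d) := by
          gcongr
          exact hφ _ (half_pos hx)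
      _ = (A + 2 * C₁) / 2 ^ d * x ^ d := by
          rw [Real.div_rpow hx.le zero_le_two]; ring
      _ = A * x ^ d := by rw [hA]

theorem succ_le_geomCount_inv (h : IsFractalString ℓ) (j : ℕ) :
    (j + 1 : ℝ) ≤ geomCount ℓ (ℓ j)⁻¹ := by
  have hsub : (range (j + 1) : Set ℕ) ⊆ {i | (ℓ i)⁻¹ ≤ (ℓ j)⁻¹} := fun i hi =>
    inv_anti₀ (h.1 j) (h.2.1 (Nat.lt_succ_iff.1 (mem_range.1 hi)))
  have := Set.ncard_le_ncard hsub (h.finite_setOf_inv_le (inv_pos.2 (h.1 j)))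
  rw [Set.ncard_coe_finset, card_range] at this
  unfold geomCount
  exact_mod_cast this

theorem le_mul_rpow_of_geomCount_le (h : IsFractalString ℓ) {d C : ℝ} (hd : 0 < d)
    (hC : 0 ≤ C) (hN : ∀ x : ℝ, 0 < x → geomCount ℓ x ≤ C * x ^ d) (j : ℕ) :
    ℓ j ≤ C ^ (1 / d) * ((j : ℝ) + 1) ^ (-(1 / d)) := by
  have hj : (0 : ℝ) < j + 1 := by positivity
  have key : ℓ j ^ d ≤ C / (j + 1) := by
    have := (h.succ_le_geomCount_inv j).trans (hN _ (inv_pos.2 (h.1 j)))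
    rw [Real.inv_rpow (h.1 j).le, ← div_eq_mul_inv,
      le_div_iff₀ (Real.rpow_pos_of_pos (h.1 j) d)] at this
    rwa [le_div_iff₀ hj, mul_comm]
  rw [Real.rpow_neg hj.le, ← div_eq_mul_inv, ← Real.div_rpow hC hj.le, one_div,
    Real.le_rpow_inv_iff_of_pos (h.1 j).le (by positivity) hd]
  exact key

theorem stringVol_le_of_le_rpow (h : IsFractalString ℓ) {c q : ℝ} (hc : 0 ≤ c) (hq : 0 < q)
    (hℓ : ∀ j : ℕ, ℓ j ≤ c * ((j : ℝ) + 1) ^ (-(q + 1))) {ε : ℝ} (hε : 0 ≤ ε) {J : ℕ}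
    (hJ : 0 < J) :
    stringVol ℓ ε ≤ 2 * ε * J + c / q * (J : ℝ) ^ (-q) := by
  rw [stringVol, ← (h.summable_min (by positivity)).sum_add_tsum_nat_add J]
  gcongr
  · calc ∑ j ∈ range J, min (ℓ j) (2 * ε) ≤ ∑ _j ∈ range J, 2 * ε :=
          sum_le_sum fun _ _ => min_le_right _ _
      _ = 2 * ε * J := by rw [sum_const, card_range, nsmul_eq_mul, mul_comm]
  · exact tsum_nat_add_le_of_le_rpow (fun j => le_min (h.1 j).le (by positivity)) hc hq
      (fun j => (min_le_left _ _).trans (hℓ j)) hJ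

theorem upperContent_lt_top_of_le_rpow (h : IsFractalString ℓ) {d c : ℝ} (hd0 : 0 < d)
    (hd1 : d < 1) (hc : 0 < c) (hℓ : ∀ j : ℕ, ℓ j ≤ c * ((j : ℝ) + 1) ^ (-(1 / d))) :
    upperContent ℓ d < ⊤ := by
  set q := 1 / d - 1
  have hq : 0 < q := by rw [sub_pos, lt_div_iff₀ hd0]; linarith
  have hdq : d * -q = d - 1 := by rw [mul_neg, mul_sub, mul_one_div_cancel hd0.ne']; ring
  refine upperContent_lt_top_iff.2 ⟨(2 * c + c / q) * (c / 2) ^ (d - 1), ?_⟩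
  filter_upwards [Ioo_mem_nhdsGT (half_pos hc)] with ε ⟨hε, hεc⟩
  -- `c (j + 1)^{-1/d}` falls below `2ε` near `j = u ^ d`; cut the sum there
  set u := c / (2 * ε)
  have hu : 1 < u := by rw [lt_div_iff₀ (by positivity)]; linarith
  have hεu : 2 * ε * u = c := mul_div_cancel₀ _ (by positivity)
  have hud : 1 < u ^ d := Real.one_lt_rpow hu hd0
  have hJ : (⌈u ^ d⌉₊ : ℝ) ≤ 2 * u ^ d := by
    linarith [Nat.ceil_lt_add_one (zero_le_one.trans hud.le)]
  calc stringVol ℓ ε ≤ 2 * ε * ⌈u ^ d⌉₊ + c / q * (⌈u ^ d⌉₊ : ℝ) ^ (-q) :=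
        h.stringVol_le_of_le_rpow hc.le hq (by simpa [q] using hℓ) hε.le
          (Nat.ceil_pos.2 (zero_lt_one.trans hud))
    _ ≤ 2 * ε * (2 * u ^ d) + c / q * (u ^ d) ^ (-q) := by
        gcongr 2 * ε * ?_ + _ * ?_
        exact Real.rpow_le_rpow_of_nonpos (zero_lt_one.trans hud) (Nat.le_ceil _)
          (neg_nonpos.2 hq.le)
    _ = (2 * c + c / q) * u ^ (d - 1) := by
        rw [← Real.rpow_mul (by positivity), hdq, Real.rpow_sub (by positivity), Real.rpow_one]
        field_simp
        linear_combination (2 * q) * hεu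
    _ = (2 * c + c / q) * (c / 2) ^ (d - 1) * ε ^ (1 - d) := by
        rw [show u = c / 2 / ε by ring, Real.div_rpow (by positivity) hε.le,
          show 1 - d = -(d - 1) by ring, Real.rpow_neg hε.le]
        ring

end IsFractalString

/-- For a fractal string and `d ∈ (0,1)`, the following are
equivalent: (i) `M*_d < ∞`; (ii) `ℓ_j ≤ c j^{-1/d}` for all `j`;
(iii) `N_L(x) ≤ C x^d` for all `x > 0`; (iv) `φ_ν(x) = W(x) - N_ν(x) ≤ C₁ x^d`
for all `x > 0`. -/
theorem upperContent_tfae (ℓ : ℕ → ℝ) (h : IsFractalString ℓ) (d : ℝ)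
    (hd : d ∈ Set.Ioo (0:ℝ) 1) :
    [ upperContent ℓ d < ⊤,
      ∃ c : ℝ, 0 < c ∧ ∀ j : ℕ, ℓ j ≤ c * ((j : ℝ) + 1) ^ (-(1 / d)),
      ∃ C : ℝ, 0 < C ∧ ∀ x : ℝ, 0 < x → geomCount ℓ x ≤ C * x ^ d,
      ∃ C₁ : ℝ, 0 < C₁ ∧ ∀ x : ℝ, 0 < x → phiNu ℓ x ≤ C₁ * x ^ d ].TFAE := by
  obtain ⟨hd0, hd1⟩ := hd
  tfae_have 1 → 4 := fun hfin => by
    obtain ⟨K, hK, hV⟩ := h.exists_forall_stringVol_le hd1.le hfin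
    exact ⟨K / 2 ^ (1 - d), by positivity, fun x hx => h.phiNu_le_of_stringVol_le hV hx⟩
  tfae_have 4 → 3 := fun ⟨C₁, hC₁, hφ⟩ =>
    ⟨2 * C₁ / (2 ^ d - 1),
      div_pos (by positivity) (sub_pos.2 (Real.one_lt_rpow one_lt_two hd0)),
      fun x hx => h.geomCount_le_of_phiNu_le hd0 hC₁.le hφ hx⟩
  tfae_have 3 → 2 := fun ⟨C, hC, hN⟩ =>
    ⟨C ^ (1 / d), by positivity, h.le_mul_rpow_of_geomCount_le hd0 hC.le hN⟩
  tfae_have 2 → 1 := fun ⟨c, hc, hℓ⟩ => h.upperContent_lt_top_of_le_rpow hd0 hd1 hc hℓ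
  tfae_finish
end

section
/- Let D ∈ (0,1) and let L = (ℓ_j)_{j≥1} be a fractal string whose spectral counting function satisfies N_ν(x) = W(x) − C x^D + o(x^D) as x → +∞ for some nonzero real constant C. Then L is Minkowski nondegenerate of dimension D; that is, 0 < M_{*,D} ≤ M*_D < ∞, and in particular the Minkowski dimension of L equals D. -/
open Filter Topology

/-!
Write `φ(x) = W(x) - N_ν(x) = ∑ⱼ {ℓⱼ x}`; the hypothesis says `φ(x) / x ^ D → C`, so `C > 0`.
Since `a {ℓ / a} ≤ min ℓ a`, we get `2ε φ(1 / 2ε) ≤ V(ε)`, hence `V(ε) ≳ ε ^ (1 - D)`.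
Conversely `min ℓ a ≤ 4a {ℓ / 4a} + min ℓ (2a) / 2` gives
`V(ε) ≤ 8ε φ(1 / 8ε) + V(2ε) / 2`; as `2 ^ (1 - D) / 2 < 1` and `V ≤ ∑ ℓⱼ`, this recursion
yields `V(ε) ≲ ε ^ (1 - D)`. The two-sided bound `V(ε) ≍ ε ^ (1 - D)` pins down both contents and
the Minkowski dimension.
-/

section Fract

variable {𝕜 : Type*} [Field 𝕜] [LinearOrder 𝕜] [IsStrictOrderedRing 𝕜] [FloorRing 𝕜] {y a : 𝕜}

lemma Int.fract_le_self_of_nonneg_s13 (hy : 0 ≤ y) : Int.fract y ≤ y := by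
  rw [← Int.self_sub_floor]
  have : (0 : 𝕜) ≤ ⌊y⌋ := Int.cast_nonneg (Int.floor_nonneg.mpr hy)
  linarith

lemma mul_fract_mul_inv_le_min (hy : 0 ≤ y) (ha : 0 < a) :
    a * Int.fract (y * a⁻¹) ≤ min y a := by
  refine le_min ?_ ?_
  · calc a * Int.fract (y * a⁻¹) ≤ a * (y * a⁻¹) :=
          mul_le_mul_of_nonneg_left (Int.fract_le_self_of_nonneg_s13 (by positivity)) ha.le
      _ = y := by field_simp
  · simpa using mul_le_mul_of_nonneg_left (Int.fract_lt_one (y * a⁻¹)).le ha.le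

/-- Lengths `y ≤ 2a` are seen exactly by the fractional part at scale `4a`; longer ones are
capped at `a` by the second term. -/
lemma min_le_mul_fract_mul_inv_add_half_min (hy : 0 ≤ y) (ha : 0 < a) :
    min y a ≤ 4 * a * Int.fract (y * (4 * a)⁻¹) + min y (2 * a) / 2 := by
  have hfract := Int.fract_nonneg (y * (4 * a)⁻¹)
  rcases le_or_gt y (2 * a) with hy2 | hy2
  · have hsmall : Int.fract (y * (4 * a)⁻¹) = y * (4 * a)⁻¹ := by
      rw [Int.fract_eq_self]
      constructor
      · positivity
      · rw [← div_eq_mul_inv, div_lt_one (by positivity)]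
        linarith
    rw [hsmall, min_eq_left hy2]
    have : 4 * a * (y * (4 * a)⁻¹) = y := by field_simp
    linarith [min_le_left y a]
  · rw [min_eq_right hy2.le]
    nlinarith [min_le_right y a]

end Fract

section StringSums

variable {ℓ : ℕ → ℝ}

lemma summable_fract_mul (hℓ : ∀ j, 0 ≤ ℓ j) (hs : Summable ℓ) {x : ℝ} (hx : 0 ≤ x) :
    Summable fun j => Int.fract (ℓ j * x) :=
  (hs.mul_right x).of_nonneg_of_le (fun _ => Int.fract_nonneg _)
    fun j => Int.fract_le_self_of_nonneg_s13 (mul_nonneg (hℓ j) hx)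

lemma summable_min_const (hℓ : ∀ j, 0 ≤ ℓ j) (hs : Summable ℓ) {c : ℝ} (hc : 0 ≤ c) :
    Summable fun j => min (ℓ j) c :=
  hs.of_nonneg_of_le (fun j => le_min (hℓ j) hc) fun _ => min_le_left _ _

lemma phiNu_eq_tsum_fract (hℓ : ∀ j, 0 ≤ ℓ j) (hs : Summable ℓ) {x : ℝ} (hx : 0 ≤ x) :
    phiNu ℓ x = ∑' j, Int.fract (ℓ j * x) := by
  have hfloor : Summable fun j => (⌊ℓ j * x⌋₊ : ℝ) :=
    (hs.mul_right x).of_nonneg_of_le (fun _ => Nat.cast_nonneg _)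
      fun j => Nat.floor_le (mul_nonneg (hℓ j) hx)
  rw [phiNu, weylTerm, spectralCount, ← tsum_mul_right, ← (hs.mul_right x).tsum_sub hfloor]
  congr 1 with j
  rw [natCast_floor_eq_intCast_floor (mul_nonneg (hℓ j) hx), Int.self_sub_floor]

lemma phiNu_nonneg (hℓ : ∀ j, 0 ≤ ℓ j) (hs : Summable ℓ) {x : ℝ} (hx : 0 ≤ x) :
    0 ≤ phiNu ℓ x := by
  rw [phiNu_eq_tsum_fract hℓ hs hx]
  exact tsum_nonneg fun _ => Int.fract_nonneg _

lemma stringVol_le_tsum (hℓ : ∀ j, 0 ≤ ℓ j) (hs : Summable ℓ) {ε : ℝ} (hε : 0 ≤ ε) :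
    stringVol ℓ ε ≤ ∑' j, ℓ j :=
  (summable_min_const hℓ hs (by positivity)).tsum_le_tsum (fun _ => min_le_left _ _) hs

lemma mul_phiNu_inv_le_stringVol (hℓ : ∀ j, 0 ≤ ℓ j) (hs : Summable ℓ) {ε : ℝ} (hε : 0 < ε) :
    2 * ε * phiNu ℓ (2 * ε)⁻¹ ≤ stringVol ℓ ε := by
  have hx : (0 : ℝ) ≤ (2 * ε)⁻¹ := by positivity
  rw [phiNu_eq_tsum_fract hℓ hs hx, stringVol, ← tsum_mul_left]
  exact ((summable_fract_mul hℓ hs hx).mul_left _).tsum_le_tsum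
    (fun j => mul_fract_mul_inv_le_min (hℓ j) (by positivity))
    (summable_min_const hℓ hs (by positivity))

lemma stringVol_le_mul_phiNu_inv_add_half (hℓ : ∀ j, 0 ≤ ℓ j) (hs : Summable ℓ) {ε : ℝ}
    (hε : 0 < ε) :
    stringVol ℓ ε ≤ 8 * ε * phiNu ℓ (8 * ε)⁻¹ + stringVol ℓ (2 * ε) / 2 := by
  have hx : (0 : ℝ) ≤ (8 * ε)⁻¹ := by positivity
  have hfract := (summable_fract_mul hℓ hs hx).mul_left (8 * ε)
  have hmin := (summable_min_const hℓ hs (c := 2 * (2 * ε)) (by positivity)).div_const 2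
  rw [phiNu_eq_tsum_fract hℓ hs hx, stringVol, stringVol, ← tsum_mul_left, ← tsum_div_const,
    ← hfract.tsum_add hmin]
  refine (summable_min_const hℓ hs (by positivity)).tsum_le_tsum (fun j => ?_)
    (hfract.add hmin)
  have key := min_le_mul_fract_mul_inv_add_half_min (hℓ j) (a := 2 * ε) (by positivity)
  rw [show 4 * (2 * ε) = 8 * ε by ring] at key
  exact key

end StringSums

/-- The bound `U ε ≤ M ε ^ p` for `ε ≥ ε₀` propagates from `2ε` down to `ε` because
`2 ^ p / 2 < 1`; doubling reaches `[ε₀, ∞)` from any `ε > 0`. -/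
lemma exists_forall_le_mul_rpow_of_le_add_half {U : ℝ → ℝ} {p K L : ℝ} (hp0 : 0 ≤ p)
    (hp1 : p < 1) (hU : ∀ ε, 0 < ε → U ε ≤ L)
    (hrec : ∀ᶠ ε in 𝓝[>] 0, U ε ≤ K * ε ^ p + U (2 * ε) / 2) :
    ∃ M, ∀ ε, 0 < ε → U ε ≤ M * ε ^ p := by
  obtain ⟨ε₀, hε₀ : 0 < ε₀, hsub⟩ := mem_nhdsGT_iff_exists_Ioo_subset.mp hrec
  set q : ℝ := 2 ^ (p - 1)
  have hq : q < 1 := Real.rpow_lt_one_of_one_lt_of_neg one_lt_two (by linarith)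
  set M := max (max L 0 / ε₀ ^ p) (K / (1 - q))
  have hM_large : max L 0 ≤ M * ε₀ ^ p := by
    rw [← div_le_iff₀ (by positivity)]
    exact le_max_left _ _
  have hM_step : K + M * q ≤ M := by
    have := (div_le_iff₀ (by linarith)).mp (le_max_right (max L 0 / ε₀ ^ p) (K / (1 - q)))
    linarith
  have hM_nonneg : 0 ≤ M := le_max_of_le_left (by positivity)
  have hlarge : ∀ ε, ε₀ ≤ ε → U ε ≤ M * ε ^ p := fun ε hε₀ε =>
    calc U ε ≤ max L 0 := (hU ε (hε₀.trans_le hε₀ε)).trans (le_max_left _ _)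
      _ ≤ M * ε₀ ^ p := hM_large
      _ ≤ M * ε ^ p := by gcongr
  have hbound : ∀ n : ℕ, ∀ ε, 0 < ε → ε₀ ≤ 2 ^ n * ε → U ε ≤ M * ε ^ p := by
    intro n
    induction n with
    | zero => exact fun ε _ hε₀ε => hlarge ε (by simpa using hε₀ε)
    | succ n ih =>
      intro ε hε hε₀ε
      rcases le_or_gt ε₀ ε with hε₀ε' | hsmall
      · exact hlarge ε hε₀ε'
      · have h2ε := ih (2 * ε) (by positivity) (by rw [← mul_assoc, ← pow_succ]; exact hε₀ε)
        have hscale : (2 * ε) ^ p / 2 = q * ε ^ p := by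
          rw [Real.mul_rpow zero_le_two hε.le,
            show q = 2 ^ p / 2 from Real.rpow_sub_one two_ne_zero p]
          ring
        calc U ε ≤ K * ε ^ p + U (2 * ε) / 2 := hsub ⟨hε, hsmall⟩
          _ ≤ K * ε ^ p + M * (2 * ε) ^ p / 2 := by gcongr
          _ = (K + M * q) * ε ^ p := by rw [mul_div_assoc, hscale]; ring
          _ ≤ M * ε ^ p := by gcongr
  refine ⟨M, fun ε hε => ?_⟩
  obtain ⟨n, hn⟩ := pow_unbounded_of_one_lt (ε₀ / ε) one_lt_two
  exact hbound n ε hε ((div_le_iff₀ hε).mp hn.le)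

section MinkowskiContent

variable {ℓ : ℕ → ℝ} {c d D M : ℝ}

lemma upperContent_lt_top_of_stringVol_le (hDd : D ≤ d)
    (hV : ∀ᶠ ε in 𝓝[>] 0, stringVol ℓ ε ≤ M * ε ^ (1 - D)) : upperContent ℓ d < ⊤ := by
  refine (limsup_le_of_le (a := ENNReal.ofReal (max M 0)) ?_ ?_).trans_lt ENNReal.ofReal_lt_top
  · isBoundedDefault
  filter_upwards [hV, Ioc_mem_nhdsGT one_pos] with ε hVε ⟨hε, hε1⟩
  refine ENNReal.ofReal_le_ofReal ((div_le_iff₀ (by positivity)).mpr ?_)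
  calc stringVol ℓ ε ≤ M * ε ^ (1 - D) := hVε
    _ ≤ max M 0 * ε ^ (1 - D) := mul_le_mul_of_nonneg_right (le_max_left _ _) (by positivity)
    _ ≤ max M 0 * ε ^ (1 - d) := mul_le_mul_of_nonneg_left
      (Real.rpow_le_rpow_of_exponent_ge hε hε1 (by linarith)) (le_max_right _ _)

lemma tendsto_stringVol_div_rpow_atTop (hc : 0 < c)
    (hV : ∀ᶠ ε in 𝓝[>] 0, c * ε ^ (1 - D) ≤ stringVol ℓ ε) (hdD : d < D) :
    Tendsto (fun ε => stringVol ℓ ε / ε ^ (1 - d)) (𝓝[>] 0) atTop := by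
  refine tendsto_atTop_mono' _ ?_
    ((tendsto_rpow_neg_nhdsGT_zero (sub_neg.mpr hdD)).const_mul_atTop hc)
  filter_upwards [hV, self_mem_nhdsWithin] with ε hVε (hε : 0 < ε)
  rwa [le_div_iff₀ (by positivity), mul_assoc, ← Real.rpow_add hε,
    show d - D + (1 - d) = 1 - D by ring]

lemma upperContent_eq_top_of_le_stringVol (hc : 0 < c)
    (hV : ∀ᶠ ε in 𝓝[>] 0, c * ε ^ (1 - D) ≤ stringVol ℓ ε) (hdD : d < D) :
    upperContent ℓ d = ⊤ :=
  (ENNReal.tendsto_ofReal_atTop.comp (tendsto_stringVol_div_rpow_atTop hc hV hdD)).limsup_eq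

lemma lowerContent_pos_of_le_stringVol (hc : 0 < c)
    (hV : ∀ᶠ ε in 𝓝[>] 0, c * ε ^ (1 - D) ≤ stringVol ℓ ε) : 0 < lowerContent ℓ D := by
  refine (ENNReal.ofReal_pos.mpr hc).trans_le (le_liminf_of_le ?_ ?_)
  · isBoundedDefault
  filter_upwards [hV, self_mem_nhdsWithin] with ε hVε (hε : 0 < ε)
  exact ENNReal.ofReal_le_ofReal ((le_div_iff₀ (by positivity)).mpr hVε)

lemma minkDim_eq_of_stringVol_bounds (hD : 0 ≤ D) (hc : 0 < c)
    (hlow : ∀ᶠ ε in 𝓝[>] 0, c * ε ^ (1 - D) ≤ stringVol ℓ ε)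
    (hup : ∀ᶠ ε in 𝓝[>] 0, stringVol ℓ ε ≤ M * ε ^ (1 - D)) : minkDim ℓ = D := by
  have hset : {d | 0 ≤ d ∧ upperContent ℓ d < ⊤} = Set.Ici D := by
    ext d
    refine ⟨fun ⟨_, hd⟩ => Set.mem_Ici.mpr (le_of_not_gt fun hdD => ?_),
      fun hDd => ⟨hD.trans hDd, upperContent_lt_top_of_stringVol_le hDd hup⟩⟩
    exact hd.ne (upperContent_eq_top_of_le_stringVol hc hlow hdD)
  rw [minkDim, hset, csInf_Ici]

end MinkowskiContent

section SpectralAsymptotics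

variable {ℓ : ℕ → ℝ} {C D : ℝ}

lemma tendsto_phiNu_div_rpow (hasymp : SpectralAsymp ℓ D C) :
    Tendsto (fun x => phiNu ℓ x / x ^ D) atTop (𝓝 C) := by
  have hlim := tendsto_const_nhds (x := C) |>.sub hasymp
  rw [sub_zero] at hlim
  refine hlim.congr' ?_
  filter_upwards [eventually_gt_atTop 0] with x hx
  have hxD : x ^ D ≠ 0 := (Real.rpow_pos_of_pos hx D).ne'
  rw [phiNu]
  field_simp
  ring

lemma spectralAsymp_const_nonneg (hℓ : ∀ j, 0 ≤ ℓ j) (hs : Summable ℓ)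
    (hasymp : SpectralAsymp ℓ D C) : 0 ≤ C :=
  ge_of_tendsto (tendsto_phiNu_div_rpow hasymp) <| by
    filter_upwards [eventually_gt_atTop 0] with x hx
    exact div_nonneg (phiNu_nonneg hℓ hs hx.le) (Real.rpow_pos_of_pos hx D).le

lemma tendsto_inv_const_mul_nhdsGT_zero {c : ℝ} (hc : 0 < c) :
    Tendsto (fun ε : ℝ => (c * ε)⁻¹) (𝓝[>] 0) atTop := by
  simpa only [mul_inv_rev] using tendsto_inv_nhdsGT_zero.atTop_mul_const (inv_pos.mpr hc)

lemma Real.mul_inv_rpow_eq_rpow_one_sub {a : ℝ} (ha : 0 < a) (D : ℝ) :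
    a * a⁻¹ ^ D = a ^ (1 - D) := by
  rw [Real.inv_rpow ha.le, Real.rpow_sub ha, Real.rpow_one, div_eq_mul_inv]

lemma eventually_le_stringVol (hℓ : ∀ j, 0 ≤ ℓ j) (hs : Summable ℓ) (hC : 0 < C)
    (hasymp : SpectralAsymp ℓ D C) :
    ∀ᶠ ε in 𝓝[>] 0, C / 2 * 2 ^ (1 - D) * ε ^ (1 - D) ≤ stringVol ℓ ε := by
  have hphi : ∀ᶠ x in atTop, C / 2 < phiNu ℓ x / x ^ D :=
    (tendsto_phiNu_div_rpow hasymp).eventually (lt_mem_nhds (half_lt_self hC))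
  filter_upwards [(tendsto_inv_const_mul_nhdsGT_zero two_pos).eventually hphi,
    self_mem_nhdsWithin] with ε hφε (hε : 0 < ε)
  have hx : 0 < (2 * ε)⁻¹ := by positivity
  rw [lt_div_iff₀ (Real.rpow_pos_of_pos hx D)] at hφε
  calc C / 2 * 2 ^ (1 - D) * ε ^ (1 - D) = 2 * ε * (C / 2 * (2 * ε)⁻¹ ^ D) := by
        rw [mul_left_comm, Real.mul_inv_rpow_eq_rpow_one_sub (by positivity),
          Real.mul_rpow zero_le_two hε.le, mul_assoc]
    _ ≤ 2 * ε * phiNu ℓ (2 * ε)⁻¹ := by gcongr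
    _ ≤ stringVol ℓ ε := mul_phiNu_inv_le_stringVol hℓ hs hε

lemma eventually_stringVol_le_add_half (hℓ : ∀ j, 0 ≤ ℓ j) (hs : Summable ℓ)
    (hasymp : SpectralAsymp ℓ D C) :
    ∀ᶠ ε in 𝓝[>] 0,
      stringVol ℓ ε ≤ (C + 1) * 8 ^ (1 - D) * ε ^ (1 - D) + stringVol ℓ (2 * ε) / 2 := by
  have hphi : ∀ᶠ x in atTop, phiNu ℓ x / x ^ D < C + 1 :=
    (tendsto_phiNu_div_rpow hasymp).eventually (gt_mem_nhds (lt_add_one C))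
  filter_upwards [(tendsto_inv_const_mul_nhdsGT_zero (by norm_num : (0 : ℝ) < 8)).eventually hphi,
    self_mem_nhdsWithin] with ε hφε (hε : 0 < ε)
  have hx : 0 < (8 * ε)⁻¹ := by positivity
  rw [div_lt_iff₀ (Real.rpow_pos_of_pos hx D)] at hφε
  have hfirst : 8 * ε * phiNu ℓ (8 * ε)⁻¹ ≤ (C + 1) * 8 ^ (1 - D) * ε ^ (1 - D) :=
    calc 8 * ε * phiNu ℓ (8 * ε)⁻¹ ≤ 8 * ε * ((C + 1) * (8 * ε)⁻¹ ^ D) := by gcongr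
      _ = (C + 1) * 8 ^ (1 - D) * ε ^ (1 - D) := by
        rw [mul_left_comm, Real.mul_inv_rpow_eq_rpow_one_sub (by positivity),
          Real.mul_rpow (by norm_num) hε.le, mul_assoc]
  linarith [stringVol_le_mul_phiNu_inv_add_half hℓ hs hε]

end SpectralAsymptotics

/-- (Lapidus–Pomerance) If a fractal string satisfies
`N_ν(x) = W(x) - C x^D + o(x^D)` for some nonzero real `C` and some `D ∈ (0,1)`,
then it is Minkowski nondegenerate of dimension `D`:
`0 < M_{*,D} ≤ M*_D < ∞` and its Minkowski dimension equals `D`. -/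
theorem spectralAsymp_implies_nondegenerate (ℓ : ℕ → ℝ) (h : IsFractalString ℓ)
    (D : ℝ) (hD : D ∈ Set.Ioo (0:ℝ) 1) (C : ℝ) (hC : C ≠ 0)
    (hasymp : SpectralAsymp ℓ D C) :
    0 < lowerContent ℓ D ∧ upperContent ℓ D < ⊤ ∧ minkDim ℓ = D := by
  obtain ⟨hpos, -, hs⟩ := h
  have hℓ : ∀ j, 0 ≤ ℓ j := fun j => (hpos j).le
  have hCpos : 0 < C := (spectralAsymp_const_nonneg hℓ hs hasymp).lt_of_ne' hC
  have hlow := eventually_le_stringVol hℓ hs hCpos hasymp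
  have hc : 0 < C / 2 * 2 ^ (1 - D) := by positivity
  obtain ⟨M, hM⟩ := exists_forall_le_mul_rpow_of_le_add_half (by linarith [hD.2])
    (by linarith [hD.1]) (fun ε hε => stringVol_le_tsum hℓ hs hε.le)
    (eventually_stringVol_le_add_half hℓ hs hasymp)
  have hup : ∀ᶠ ε in 𝓝[>] 0, stringVol ℓ ε ≤ M * ε ^ (1 - D) :=
    eventually_nhdsWithin_of_forall hM
  exact ⟨lowerContent_pos_of_le_stringVol hc hlow,
    upperContent_lt_top_of_stringVol_le le_rfl hup,
    minkDim_eq_of_stringVol_bounds hD.1.le hc hlow hup⟩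
end
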